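/- For every integer k > 0 and every 0 ≤ j ≤ n − 1, the set (F_n)_{k,j} is the disjoint union of k + 1 subsets: one subset admitting a target-preserving bijection onto (F_n)_{0,j}, and for each l = 1, …, k, one subset admitting a target-preserving bijection onto (F_n)_{l,j+1}. -/
import Mathlib


/-! Common setup for the groupoid `F_n` of the quantum sphere `S_q^{2n+1}`. -/

/-- `x_i + w_i ≥ 0` for all `i` (vacuous at coordinates where `w_i = ∞`). -/
def okPos {n : ℕ} (x : Fin n → ℤ) (w : Fin n → ℕ∞) : Prop :=
  ∀ i, ∀ m : ℕ, w i = (m : ℕ∞) → 0 ≤ x i + (m : ℤ)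

/-- The defining condition of `F̃_n`: whenever `w_i = ∞`,
`x_i = -z - x_1 - ⋯ - x_{i-1}` and `x_j = 0` for `j > i`. -/
def condF {n : ℕ} (z : ℤ) (x : Fin n → ℤ) (w : Fin n → ℕ∞) : Prop :=
  ∀ i, w i = ⊤ → (x i = -z - ∑ j ∈ Finset.Iio i, x j) ∧ (∀ j, i < j → x j = 0)

/-- The set `F̃_n` of admissible triples `(z, x, w)`. -/
abbrev FTil (n : ℕ) : Type :=
  {p : ℤ × (Fin n → ℤ) × (Fin n → ℕ∞) // okPos p.2.1 p.2.2 ∧ condF p.1 p.2.1 p.2.2}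

/-- `ν(w)`: keep coordinates before the first `∞`, replace all later ones by `∞`. -/
def qnu {n : ℕ} (w : Fin n → ℕ∞) : Fin n → ℕ∞ :=
  fun i => if ∃ j, j ≤ i ∧ w j = ⊤ then ⊤ else w i

/-- Addition of an integer to an extended natural number (`a + ∞ = ∞`). -/
def addZN (a : ℤ) (b : ℕ∞) : ℕ∞ :=
  if b = ⊤ then ⊤ else (((a + (b.toNat : ℤ)).toNat : ℕ) : ℕ∞)

/-- Coordinatewise sum `x + w`. -/
def addxw {n : ℕ} (x : Fin n → ℤ) (w : Fin n → ℕ∞) : Fin n → ℕ∞ :=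
  fun i => addZN (x i) (w i)

/-- The relation `(z, x, w) ∼ (z', x', w')` iff `z = z'`, `x = x'`, `ν(w) = ν(w')`. -/
def FRel {n : ℕ} (a b : FTil n) : Prop :=
  a.val.1 = b.val.1 ∧ a.val.2.1 = b.val.2.1 ∧ qnu a.val.2.2 = qnu b.val.2.2

instance FSetoid (n : ℕ) : Setoid (FTil n) where
  r := FRel
  iseqv := ⟨fun _ => ⟨rfl, rfl, rfl⟩, fun h => ⟨h.1.symm, h.2.1.symm, h.2.2.symm⟩,
    fun h1 h2 => ⟨h1.1.trans h2.1, h1.2.1.trans h2.2.1, h1.2.2.trans h2.2.2⟩⟩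

/-- The groupoid `F_n = F̃_n / ∼`. -/
abbrev Fgpd (n : ℕ) : Type := Quotient (FSetoid n)

/-- The `z`-component of a class in `F_n`. -/
def qzp {n : ℕ} (g : Fgpd n) : ℤ :=
  Quotient.lift (fun a : FTil n => a.val.1) (fun a b h => (h : FRel a b).1) g

/-- The `x`-component of a class in `F_n`. -/
def qxp {n : ℕ} (g : Fgpd n) : Fin n → ℤ :=
  Quotient.lift (fun a : FTil n => a.val.2.1) (fun a b h => (h : FRel a b).2.1) g

/-- The source `ν(w)` of a class in `F_n`. -/
def qsrc {n : ℕ} (g : Fgpd n) : Fin n → ℕ∞ :=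
  Quotient.lift (fun a : FTil n => qnu a.val.2.2) (fun a b h => (h : FRel a b).2.2) g

/-- The target `ν(x + w)` of a class in `F_n` (computed on a representative). -/
noncomputable def qtgt {n : ℕ} (g : Fgpd n) : Fin n → ℕ∞ :=
  qnu (addxw g.out.val.2.1 g.out.val.2.2)

/-- `qIsMul g h p` states that the product `g · h` is defined and equals `p`:
the source of `g` equals the target of `h`, and `p = [(z + z', x + x', w')]`
(a class in `F_n` is determined by its `z`-, `x`-components and its source). -/
def qIsMul {n : ℕ} (g h p : Fgpd n) : Prop :=
  qsrc g = qtgt h ∧ qzp p = qzp g + qzp h ∧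
    (∀ i, qxp p i = qxp g i + qxp h i) ∧ qsrc p = qsrc h

/-- The subset `(F_n)_{k,j}` of classes of degree `k` whose source vanishes in the
first `j` coordinates. -/
def Fkj (n : ℕ) (k : ℤ) (j : ℕ) : Set (Fgpd n) :=
  {g : Fgpd n | qzp g = k ∧ ∀ i : Fin n, (i : ℕ) < j → qsrc g i = 0}


section Helpers

variable {n : ℕ}

lemma addZN_eq_top {a : ℤ} {b : ℕ∞} : addZN a b = ⊤ ↔ b = ⊤ := by
  unfold addZN; split <;> simp_all

lemma addZN_coe (a : ℤ) (m : ℕ) : addZN a (m : ℕ∞) = (((a + m).toNat : ℕ) : ℕ∞) := by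
  unfold addZN
  rw [if_neg (by simp)]
  simp

lemma qnu_apply (w : Fin n → ℕ∞) (i : Fin n) :
    qnu w i = if ∃ j, j ≤ i ∧ w j = ⊤ then ⊤ else w i := rfl

lemma qnu_top_iff {w : Fin n → ℕ∞} {i : Fin n} :
    qnu w i = ⊤ ↔ ∃ j, j ≤ i ∧ w j = ⊤ := by
  rw [qnu_apply]; split_ifs with h
  · simpa
  · constructor
    · intro hw; exact ⟨i, le_rfl, hw⟩
    · intro hx; exact absurd hx h

lemma qnu_addxw_congr {x : Fin n → ℤ} {w w' : Fin n → ℕ∞}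
    (h : qnu w = qnu w') : qnu (addxw x w) = qnu (addxw x w') := by
  have key : ∀ (v : Fin n → ℕ∞) (i : Fin n),
      (∃ j, j ≤ i ∧ addxw x v j = ⊤) ↔ qnu v i = ⊤ := by
    intro v i
    rw [qnu_top_iff]
    constructor
    · rintro ⟨j, hj, ht⟩; exact ⟨j, hj, addZN_eq_top.mp ht⟩
    · rintro ⟨j, hj, ht⟩; exact ⟨j, hj, addZN_eq_top.mpr ht⟩
  funext i
  rw [qnu_apply, qnu_apply]
  by_cases hc : qnu w i = ⊤
  · rw [if_pos ((key w i).mpr hc), if_pos ((key w' i).mpr (h ▸ hc))]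
  · have hc' : qnu w' i ≠ ⊤ := h ▸ hc
    rw [if_neg (fun hx => hc ((key w i).mp hx)), if_neg (fun hx => hc' ((key w' i).mp hx))]
    have h1 : qnu w i = w i := by
      rw [qnu_apply, if_neg (fun hx => hc (qnu_top_iff.mpr hx))]
    have h2 : qnu w' i = w' i := by
      rw [qnu_apply, if_neg (fun hx => hc' (qnu_top_iff.mpr hx))]
    show addZN (x i) (w i) = addZN (x i) (w' i)
    rw [← h1, ← h2, h]

lemma qtgt_mk (a : FTil n) :
    qtgt (⟦a⟧ : Fgpd n) = qnu (addxw a.val.2.1 a.val.2.2) := by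
  have h : FRel (⟦a⟧ : Fgpd n).out a := Quotient.mk_out a
  show qnu (addxw _ _) = _
  rw [h.2.1]
  exact qnu_addxw_congr h.2.2

lemma Fgpd.ext {g h : Fgpd n} (hz : qzp g = qzp h) (hx : qxp g = qxp h)
    (hs : qsrc g = qsrc h) : g = h := by
  rw [← Quotient.out_eq g, ← Quotient.out_eq h] at hz hx hs ⊢
  exact Quotient.sound ⟨hz, hx, hs⟩

end Helpers

section Shift

variable {n : ℕ}

open Classical in
/-- The shift map on triples: subtract `c` from `z`, add `c` to `x_j`,
subtract `c` from `w_j` (with truncation); identity if the result is inadmissible. -/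
lemma enat_cases (s : ℕ∞) : s = ⊤ ∨ ∃ m : ℕ, s = (m : ℕ∞) := by
  cases s with
  | top => exact Or.inl rfl
  | coe m => exact Or.inr ⟨m, rfl⟩

noncomputable def shiftTil (jj : Fin n) (c : ℤ) (a : FTil n) : FTil n :=
  @dite _ (okPos (Function.update a.val.2.1 jj (a.val.2.1 jj + c))
           (Function.update a.val.2.2 jj (addZN (-c) (a.val.2.2 jj))) ∧
         condF (a.val.1 - c) (Function.update a.val.2.1 jj (a.val.2.1 jj + c))
           (Function.update a.val.2.2 jj (addZN (-c) (a.val.2.2 jj))))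
    (Classical.propDecidable _)
    (fun h => ⟨(a.val.1 - c, Function.update a.val.2.1 jj (a.val.2.1 jj + c),
         Function.update a.val.2.2 jj (addZN (-c) (a.val.2.2 jj))), h⟩)
    (fun _ => a)

noncomputable def shiftF (jj : Fin n) (c : ℤ) (g : Fgpd n) : Fgpd n :=
  ⟦shiftTil jj c g.out⟧

lemma shiftF_spec (jj : Fin n) (c : ℤ) (g : Fgpd n)
    (Hw : ∀ i : Fin n, i < jj → qsrc g i = 0)
    (Hm : ∀ m₀ : ℕ, qsrc g jj = (m₀ : ℕ∞) → c ≤ (m₀ : ℤ)) :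
    qzp (shiftF jj c g) = qzp g - c ∧
    qxp (shiftF jj c g) = Function.update (qxp g) jj (qxp g jj + c) ∧
    qsrc (shiftF jj c g) = Function.update (qsrc g) jj (addZN (-c) (qsrc g jj)) ∧
    qtgt (shiftF jj c g) = qtgt g := by
  set z := g.out.val.1 with hzdef
  set x := g.out.val.2.1 with hxdef
  set w := g.out.val.2.2 with hwdef
  have hok : okPos x w := g.out.prop.1
  have hcf : condF z x w := g.out.prop.2
  have hsg : qsrc g = qnu w := by rw [← Quotient.out_eq g]; rfl
  have hzg : qzp g = z := by rw [← Quotient.out_eq g]; rfl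
  have hxg : qxp g = x := by rw [← Quotient.out_eq g]; rfl
  have htg : qtgt g = qnu (addxw x w) := rfl
  have hW : ∀ i : Fin n, i < jj → w i = 0 := by
    intro i hi
    have h0 : qnu w i = 0 := by rw [← hsg]; exact Hw i hi
    rw [qnu_apply] at h0
    split_ifs at h0 with hc
    · simp at h0
    · exact h0
  have hWjj : qnu w jj = w jj := by
    rw [qnu_apply]
    split_ifs with hc
    · obtain ⟨j', hj', ht⟩ := hc
      rcases lt_or_eq_of_le hj' with h | h
      · rw [hW j' h] at ht; simp at ht
      · rw [← h, ht]
    · rfl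
  have hMw : ∀ m₀ : ℕ, w jj = (m₀ : ℕ∞) → c ≤ (m₀ : ℤ) := by
    intro m₀ hm
    exact Hm m₀ (by rw [hsg, hWjj, hm])
  set x' := Function.update x jj (x jj + c) with hx'def
  set w' := Function.update w jj (addZN (-c) (w jj)) with hw'def
  have hx'jj : x' jj = x jj + c := Function.update_self jj _ x
  have hw'jj : w' jj = addZN (-c) (w jj) := Function.update_self jj _ w
  have hx'ne : ∀ i : Fin n, i ≠ jj → x' i = x i := fun i hi => Function.update_of_ne hi _ x
  have hw'ne : ∀ i : Fin n, i ≠ jj → w' i = w i := fun i hi => Function.update_of_ne hi _ w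
  have hwt : ∀ i : Fin n, (w' i = ⊤ ↔ w i = ⊤) := by
    intro i
    by_cases hij : i = jj
    · subst hij; rw [hw'jj, addZN_eq_top]
    · rw [hw'ne i hij]
  -- okPos for the shifted triple
  have hok' : okPos x' w' := by
    intro i m hm
    by_cases hij : i = jj
    · subst hij
      rw [hw'jj] at hm
      rw [hx'jj]
      rcases enat_cases (w i) with hwj | ⟨m₀, hm₀⟩
      · rw [hwj, addZN_eq_top.mpr rfl] at hm; simp at hm
      · rw [hm₀, addZN_coe] at hm
        have hm' : ((-c + (m₀ : ℤ)).toNat : ℕ) = m := by exact_mod_cast hm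
        have h1 : 0 ≤ x i + (m₀ : ℤ) := hok i m₀ hm₀
        omega
    · rw [hw'ne i hij] at hm
      rw [hx'ne i hij]
      exact hok i m hm
  -- condF for the shifted triple
  have hcf' : condF (z - c) x' w' := by
    intro i hi
    rw [hwt i] at hi
    rcases lt_trichotomy i jj with h | h | h
    · rw [hW i h] at hi; simp at hi
    · subst h
      obtain ⟨h1, h2⟩ := hcf i hi
      constructor
      · have hsum : ∑ j' ∈ Finset.Iio i, x' j' = ∑ j' ∈ Finset.Iio i, x j' :=
          Finset.sum_congr rfl (fun j' hj' =>
            hx'ne j' (ne_of_lt (Finset.mem_Iio.mp hj')))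
        rw [hx'jj, hsum, h1]; ring
      · intro j' hj'
        rw [hx'ne j' (ne_of_gt hj')]
        exact h2 j' hj'
    · obtain ⟨h1, h2⟩ := hcf i hi
      constructor
      · rw [hx'ne i (ne_of_gt h)]
        have hmem : jj ∈ Finset.Iio i := Finset.mem_Iio.mpr h
        have hsum2 : ∑ j' ∈ Finset.Iio i, x j'
            = ∑ j' ∈ Finset.Iio i \ {jj}, x j' + x jj :=
          (Finset.sum_eq_sum_sdiff_singleton_add hmem x).trans rfl
        have hsum1 : ∑ j' ∈ Finset.Iio i, x' j'
            = ∑ j' ∈ Finset.Iio i \ {jj}, x' j' + x' jj :=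
          (Finset.sum_eq_sum_sdiff_singleton_add hmem x').trans rfl
        have hsame : ∑ j' ∈ Finset.Iio i \ {jj}, x' j'
            = ∑ j' ∈ Finset.Iio i \ {jj}, x j' :=
          Finset.sum_congr rfl (fun j' hj' =>
            hx'ne j' (by simpa using (Finset.mem_sdiff.mp hj').2))
        rw [hsum1, hsame, hx'jj, h1, hsum2]; ring
      · intro j' hj'
        rw [hx'ne j' (ne_of_gt (lt_trans h hj'))]
        exact h2 j' hj'
  have hstep : shiftTil jj c g.out = ⟨(z - c, x', w'), hok', hcf'⟩ := by
    unfold shiftTil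
    exact dif_pos ⟨hok', hcf'⟩
  have hmk : shiftF jj c g = (⟦(⟨(z - c, x', w'), hok', hcf'⟩ : FTil n)⟧ : Fgpd n) := by
    unfold shiftF; rw [hstep]
  refine ⟨?_, ?_, ?_, ?_⟩
  · rw [hmk, hzg]; rfl
  · rw [hmk, hxg]; rfl
  · rw [hmk, hsg, hWjj]
    show qnu w' = _
    funext i
    rcases lt_trichotomy i jj with h | h | h
    · have hne : i ≠ jj := ne_of_lt h
      rw [Function.update_of_ne hne]
      have hcond : ¬ ∃ j', j' ≤ i ∧ w' j' = ⊤ := by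
        rintro ⟨j', hj', ht⟩
        have : j' < jj := lt_of_le_of_lt hj' h
        rw [hw'ne j' (ne_of_lt this), hW j' this] at ht
        simp at ht
      have hcond2 : ¬ ∃ j', j' ≤ i ∧ w j' = ⊤ := by
        rintro ⟨j', hj', ht⟩
        rw [hW j' (lt_of_le_of_lt hj' h)] at ht; simp at ht
      rw [qnu_apply, if_neg hcond, hw'ne i hne, qnu_apply, if_neg hcond2]
    · subst h
      rw [Function.update_self]
      by_cases hwj : w i = ⊤
      · rw [hwj, addZN_eq_top.mpr rfl]
        rw [qnu_top_iff.mpr ⟨i, le_rfl, (hwt i).mpr hwj⟩]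
      · have hcond : ¬ ∃ j', j' ≤ i ∧ w' j' = ⊤ := by
          rintro ⟨j', hj', ht⟩
          rcases lt_or_eq_of_le hj' with hlt | heq
          · rw [hw'ne j' (ne_of_lt hlt), hW j' hlt] at ht; simp at ht
          · rw [heq] at ht; exact hwj ((hwt i).mp ht)
        rw [qnu_apply, if_neg hcond, hw'jj]
    · have hne : i ≠ jj := ne_of_gt h
      rw [Function.update_of_ne hne]
      have hiff : (∃ j', j' ≤ i ∧ w' j' = ⊤) ↔ ∃ j', j' ≤ i ∧ w j' = ⊤ := by
        constructor
        · rintro ⟨j', hj', ht⟩; exact ⟨j', hj', (hwt j').mp ht⟩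
        · rintro ⟨j', hj', ht⟩; exact ⟨j', hj', (hwt j').mpr ht⟩
      rw [qnu_apply, qnu_apply]
      by_cases hc : ∃ j', j' ≤ i ∧ w j' = ⊤
      · rw [if_pos (hiff.mpr hc), if_pos hc]
      · rw [if_neg (fun hx => hc (hiff.mp hx)), if_neg hc, hw'ne i hne]
  · rw [hmk, qtgt_mk, htg]
    show qnu (addxw x' w') = qnu (addxw x w)
    have : addxw x' w' = addxw x w := by
      funext i
      show addZN (x' i) (w' i) = addZN (x i) (w i)
      by_cases hij : i = jj
      · subst hij
        rw [hx'jj, hw'jj]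
        rcases enat_cases (w i) with hwj | ⟨m₀, hm₀⟩
        · rw [hwj, addZN_eq_top.mpr rfl]
          rw [show addZN (x i + c) ⊤ = ⊤ from addZN_eq_top.mpr rfl,
              show addZN (x i) ⊤ = ⊤ from addZN_eq_top.mpr rfl]
        · have hcle : c ≤ (m₀ : ℤ) := hMw m₀ hm₀
          rw [hm₀]
          simp only [addZN_coe]
          congr 1
          omega
      · rw [hx'ne i hij, hw'ne i hij]
    rw [this]

end Shift

section Bij

variable {n : ℕ}

lemma addZN_neg_cancel {c : ℤ} {s : ℕ∞} (h : ∀ m₀ : ℕ, s = (m₀ : ℕ∞) → c ≤ (m₀ : ℤ)) :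
    addZN c (addZN (-c) s) = s := by
  rcases enat_cases s with hs | ⟨m₀, hs⟩ <;> subst hs
  · rw [addZN_eq_top.mpr rfl, addZN_eq_top.mpr rfl]
  · have := h m₀ rfl
    simp only [addZN_coe]
    rw [Nat.cast_inj]
    omega

lemma addZN_cancel_neg {c : ℤ} (hc : 0 ≤ c) (s : ℕ∞) :
    addZN (-c) (addZN c s) = s := by
  rcases enat_cases s with hs | ⟨m₀, hs⟩ <;> subst hs
  · rw [addZN_eq_top.mpr rfl, addZN_eq_top.mpr rfl]
  · simp only [addZN_coe]
    rw [Nat.cast_inj]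
    omega

lemma le_of_addZN_eq {c : ℤ} (hc : 0 ≤ c) {s : ℕ∞} {m : ℕ} (h : addZN c s = (m : ℕ∞)) :
    c ≤ (m : ℤ) := by
  rcases enat_cases s with hs | ⟨m₁, hs⟩ <;> subst hs
  · rw [addZN_eq_top.mpr rfl] at h; exact absurd h.symm (by simp)
  · rw [addZN_coe] at h
    have : ((c + m₁).toNat : ℕ) = m := by exact_mod_cast h
    omega

lemma shiftF_bijOn (jj : Fin n) (c : ℤ) (hc : 0 ≤ c) (A B : Set (Fgpd n))
    (hAw : ∀ g ∈ A, ∀ i : Fin n, i < jj → qsrc g i = 0)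
    (hAm : ∀ g ∈ A, ∀ m₀ : ℕ, qsrc g jj = (m₀ : ℕ∞) → c ≤ (m₀ : ℤ))
    (hBw : ∀ h ∈ B, ∀ i : Fin n, i < jj → qsrc h i = 0)
    (hAB : Set.MapsTo (shiftF jj c) A B)
    (hBA : Set.MapsTo (shiftF jj (-c)) B A) :
    Set.BijOn (shiftF jj c) A B := by
  apply Set.InvOn.bijOn ?_ hAB hBA
  constructor
  · intro g hg
    obtain ⟨hz1, hx1, hs1, -⟩ := shiftF_spec jj c g (hAw g hg) (hAm g hg)
    set g' := shiftF jj c g with hg'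
    have Hw' : ∀ i : Fin n, i < jj → qsrc g' i = 0 := by
      intro i hi
      rw [hs1, Function.update_of_ne (ne_of_lt hi)]
      exact hAw g hg i hi
    have Hm' : ∀ m₀ : ℕ, qsrc g' jj = (m₀ : ℕ∞) → -c ≤ (m₀ : ℤ) := by
      intro m₀ _; omega
    obtain ⟨hz2, hx2, hs2, -⟩ := shiftF_spec jj (-c) g' Hw' Hm'
    apply Fgpd.ext
    · rw [hz2, hz1]; ring
    · rw [hx2, hx1]
      funext i
      by_cases hij : i = jj
      · subst hij
        simp only [Function.update_self]
        ring
      · simp only [Function.update_of_ne hij]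
    · rw [hs2, hs1]
      funext i
      by_cases hij : i = jj
      · subst hij
        simp only [Function.update_self, neg_neg]
        exact addZN_neg_cancel (hAm g hg)
      · simp only [Function.update_of_ne hij]
  · intro h hh
    have Hm0 : ∀ m₀ : ℕ, qsrc h jj = (m₀ : ℕ∞) → -c ≤ (m₀ : ℤ) := by
      intro m₀ _; omega
    obtain ⟨hz1, hx1, hs1, -⟩ := shiftF_spec jj (-c) h (hBw h hh) Hm0
    set h' := shiftF jj (-c) h with hh'
    have Hw' : ∀ i : Fin n, i < jj → qsrc h' i = 0 := by
      intro i hi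
      rw [hs1, Function.update_of_ne (ne_of_lt hi)]
      exact hBw h hh i hi
    have Hm' : ∀ m₀ : ℕ, qsrc h' jj = (m₀ : ℕ∞) → c ≤ (m₀ : ℤ) := by
      intro m₀ hm
      rw [hs1, Function.update_self, neg_neg] at hm
      exact le_of_addZN_eq hc hm
    obtain ⟨hz2, hx2, hs2, -⟩ := shiftF_spec jj c h' Hw' Hm'
    apply Fgpd.ext
    · rw [hz2, hz1]; ring
    · rw [hx2, hx1]
      funext i
      by_cases hij : i = jj
      · subst hij
        simp only [Function.update_self]
        ring
      · simp only [Function.update_of_ne hij]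
    · rw [hs2, hs1]
      funext i
      by_cases hij : i = jj
      · subst hij
        simp only [Function.update_self, neg_neg]
        exact addZN_cancel_neg hc _
      · simp only [Function.update_of_ne hij]

end Bij


lemma le_addZN (k : ℕ) (s : ℕ∞) : (k : ℕ∞) ≤ addZN (k : ℤ) s := by
  rcases enat_cases s with hs | ⟨m, hs⟩ <;> subst hs
  · rw [addZN_eq_top.mpr rfl]; exact le_top
  · rw [addZN_coe, Nat.cast_le]; omega

/-- For `k > 0` and `0 ≤ j ≤ n - 1`, the set `(F_n)_{k,j}` is the
disjoint union of `k + 1` subsets: one admitting a target-preserving bijection onto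
`(F_n)_{0,j}`, and for each `l = 1, …, k`, one admitting a target-preserving bijection
onto `(F_n)_{l,j+1}`. -/
theorem stmt17 (n : ℕ) (hn : 1 ≤ n) (k : ℕ) (hk : 0 < k) (j : ℕ) (hj : j ≤ n - 1) :
    ∃ S : ℕ → Set (Fgpd n),
      (∀ a b : ℕ, a ≤ k → b ≤ k → a ≠ b → Disjoint (S a) (S b)) ∧
      (⋃ l ∈ Finset.range (k + 1), S l) = Fkj n k j ∧
      (∃ φ : Fgpd n → Fgpd n,
        Set.BijOn φ (S 0) (Fkj n 0 j) ∧ ∀ g ∈ S 0, qtgt (φ g) = qtgt g) ∧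
      (∀ l : ℕ, 1 ≤ l → l ≤ k → ∃ φ : Fgpd n → Fgpd n,
        Set.BijOn φ (S l) (Fkj n l (j + 1)) ∧ ∀ g ∈ S l, qtgt (φ g) = qtgt g) := by
  have hjn : j < n := by omega
  set jj : Fin n := ⟨j, hjn⟩ with hjjdef
  have hjval : (jj : ℕ) = j := rfl
  set S : ℕ → Set (Fgpd n) := fun l =>
    {g : Fgpd n | (qzp g = (k : ℤ) ∧ ∀ i : Fin n, (i : ℕ) < j → qsrc g i = 0) ∧
      if l = 0 then (k : ℕ∞) ≤ qsrc g jj else qsrc g jj = ((k - l : ℕ) : ℕ∞)} with hSdef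
  have hmemS : ∀ (l : ℕ) (g : Fgpd n), g ∈ S l ↔
      ((qzp g = (k : ℤ) ∧ ∀ i : Fin n, (i : ℕ) < j → qsrc g i = 0) ∧
      if l = 0 then (k : ℕ∞) ≤ qsrc g jj else qsrc g jj = ((k - l : ℕ) : ℕ∞)) :=
    fun l g => Iff.rfl
  have hltjj : ∀ i : Fin n, i < jj → (i : ℕ) < j := fun i hi => hi
  have hltj : ∀ i : Fin n, (i : ℕ) < j → i < jj := fun i hi => hi
  have hnejj : ∀ i : Fin n, (i : ℕ) < j → i ≠ jj := by
    intro i hi h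
    rw [h, hjval] at hi
    omega
  refine ⟨S, ?_, ?_, ?_, ?_⟩
  · -- disjointness
    intro a b ha hb hab
    rw [Set.disjoint_left]
    rintro g hga hgb
    obtain ⟨-, hca⟩ := (hmemS a g).mp hga
    obtain ⟨-, hcb⟩ := (hmemS b g).mp hgb
    by_cases ha0 : a = 0
    · subst ha0
      rw [if_pos rfl] at hca
      rw [if_neg (by omega)] at hcb
      rw [hcb] at hca
      have : k ≤ k - b := by exact_mod_cast hca
      omega
    · rw [if_neg ha0] at hca
      by_cases hb0 : b = 0
      · subst hb0
        rw [if_pos rfl] at hcb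
        rw [hca] at hcb
        have : k ≤ k - a := by exact_mod_cast hcb
        omega
      · rw [if_neg hb0] at hcb
        rw [hca] at hcb
        have : k - a = k - b := by exact_mod_cast hcb
        omega
  · -- union
    ext g
    simp only [Set.mem_iUnion, Finset.mem_range, exists_prop]
    constructor
    · rintro ⟨l, hl, hg⟩
      exact ⟨((hmemS l g).mp hg).1.1, ((hmemS l g).mp hg).1.2⟩
    · intro hg
      obtain ⟨h1, h2⟩ := hg
      rcases enat_cases (qsrc g jj) with hs | ⟨m₀, hs⟩
      · exact ⟨0, by omega, (hmemS 0 g).mpr ⟨⟨h1, h2⟩, by rw [if_pos rfl, hs]; exact le_top⟩⟩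
      · by_cases hkm : k ≤ m₀
        · exact ⟨0, by omega, (hmemS 0 g).mpr ⟨⟨h1, h2⟩, by
            rw [if_pos rfl, hs]; exact_mod_cast hkm⟩⟩
        · refine ⟨k - m₀, by omega, (hmemS (k - m₀) g).mpr ⟨⟨h1, h2⟩, ?_⟩⟩
          rw [if_neg (by omega), hs]
          exact Nat.cast_inj.mpr (by omega)
  · -- the bijection for l = 0
    have hAw : ∀ g ∈ S 0, ∀ i : Fin n, i < jj → qsrc g i = 0 := by
      intro g hg i hi
      exact ((hmemS 0 g).mp hg).1.2 i (hltjj i hi)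
    have hAm : ∀ g ∈ S 0, ∀ m₀ : ℕ, qsrc g jj = (m₀ : ℕ∞) → (k : ℤ) ≤ (m₀ : ℤ) := by
      intro g hg m₀ hm
      have hc := ((hmemS 0 g).mp hg).2
      rw [if_pos rfl, hm] at hc
      exact_mod_cast hc
    refine ⟨shiftF jj (k : ℤ), ?_, ?_⟩
    · apply shiftF_bijOn jj (k : ℤ) (by positivity) (S 0) (Fkj n 0 j) hAw hAm
      · -- hBw
        intro h hh i hi
        exact hh.2 i (hltjj i hi)
      · -- MapsTo forward
        intro g hg
        obtain ⟨hz, -, hs, -⟩ := shiftF_spec jj (k : ℤ) g (hAw g hg) (hAm g hg)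
        refine ⟨by rw [hz, ((hmemS 0 g).mp hg).1.1]; ring, ?_⟩
        intro i hi
        rw [hs, Function.update_of_ne (hnejj i hi)]
        exact ((hmemS 0 g).mp hg).1.2 i hi
      · -- MapsTo backward
        intro h hh
        have Hm : ∀ m₀ : ℕ, qsrc h jj = (m₀ : ℕ∞) → -(k : ℤ) ≤ (m₀ : ℤ) := by
          intro m₀ _; omega
        obtain ⟨hz, -, hs, -⟩ := shiftF_spec jj (-(k : ℤ)) h (fun i hi => hh.2 i (hltjj i hi)) Hm
        refine (hmemS 0 _).mpr ⟨⟨by rw [hz, hh.1]; ring, ?_⟩, ?_⟩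
        · intro i hi
          rw [hs, Function.update_of_ne (hnejj i hi)]
          exact hh.2 i hi
        · rw [if_pos rfl, hs, Function.update_self, neg_neg]
          exact le_addZN k _
    · intro g hg
      exact (shiftF_spec jj (k : ℤ) g (hAw g hg) (hAm g hg)).2.2.2
  · -- the bijections for 1 ≤ l ≤ k
    intro l hl1 hlk
    have hl0 : l ≠ 0 := by omega
    set c : ℤ := (k : ℤ) - (l : ℤ) with hcdef
    have hc0 : 0 ≤ c := by rw [hcdef]; omega
    have hAw : ∀ g ∈ S l, ∀ i : Fin n, i < jj → qsrc g i = 0 := by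
      intro g hg i hi
      exact ((hmemS l g).mp hg).1.2 i (hltjj i hi)
    have hAm : ∀ g ∈ S l, ∀ m₀ : ℕ, qsrc g jj = (m₀ : ℕ∞) → c ≤ (m₀ : ℤ) := by
      intro g hg m₀ hm
      have hc := ((hmemS l g).mp hg).2
      rw [if_neg hl0, hm] at hc
      have : m₀ = k - l := Nat.cast_inj.mp hc
      rw [hcdef]
      omega
    refine ⟨shiftF jj c, ?_, ?_⟩
    · apply shiftF_bijOn jj c hc0 (S l) (Fkj n l (j + 1)) hAw hAm
      · -- hBw
        intro h hh i hi
        exact hh.2 i (by have := hltjj i hi; omega)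
      · -- MapsTo forward
        intro g hg
        obtain ⟨hz, -, hs, -⟩ := shiftF_spec jj c g (hAw g hg) (hAm g hg)
        have hcnd := ((hmemS l g).mp hg).2
        rw [if_neg hl0] at hcnd
        refine ⟨by rw [hz, ((hmemS l g).mp hg).1.1, hcdef]; ring, ?_⟩
        intro i hi
        by_cases hij : i = jj
        · subst hij
          rw [hs, Function.update_self, hcnd, addZN_coe]
          have h0 : (-c + ((k - l : ℕ) : ℤ)).toNat = 0 := by rw [hcdef]; omega
          rw [h0, Nat.cast_zero]
        · have hij' : (i : ℕ) < j := by
            have : (i : ℕ) ≠ j := fun h => hij (Fin.ext (by rw [hjval]; exact h))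
            omega
          rw [hs, Function.update_of_ne hij]
          exact ((hmemS l g).mp hg).1.2 i hij'
      · -- MapsTo backward
        intro h hh
        have Hm : ∀ m₀ : ℕ, qsrc h jj = (m₀ : ℕ∞) → -c ≤ (m₀ : ℤ) := by
          intro m₀ _
          have : (0:ℤ) ≤ (m₀ : ℤ) := by positivity
          omega
        obtain ⟨hz, -, hs, -⟩ :=
          shiftF_spec jj (-c) h (fun i hi => hh.2 i (by have := hltjj i hi; omega)) Hm
        refine (hmemS l _).mpr ⟨⟨by rw [hz, hh.1, hcdef]; ring, ?_⟩, ?_⟩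
        · intro i hi
          rw [hs, Function.update_of_ne (hnejj i hi)]
          exact hh.2 i (by omega)
        · rw [if_neg hl0, hs, Function.update_self, neg_neg]
          have hs0 : qsrc h jj = 0 := hh.2 jj (by rw [hjval]; omega)
          rw [hs0, show (0 : ℕ∞) = ((0 : ℕ) : ℕ∞) from (Nat.cast_zero).symm, addZN_coe]
          exact Nat.cast_inj.mpr (by rw [hcdef]; omega)
    · intro g hg
      exact (shiftF_spec jj c g (hAw g hg) (hAm g hg)).2.2.2
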